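/- For any two labeled graphs G and H, the combined lower bound CLB(G,H) = LLB(G,H) + DLB(G,H) is at most the graph edit distance: CLB(G,H) ≤ GED(G,H). -/

import Mathlib

open scoped Classical

/-- A labeled graph: finite vertex set (of natural-number names), finite loop-free edge set,
vertex and edge labeling functions. -/
structure LGraph (Lv Le : Type) where
  verts : Finset ℕ
  edges : Finset (Sym2 ℕ)
  vl : ℕ → Lv
  el : Sym2 ℕ → Le

namespace LGraph

variable {Lv Le : Type}

/-- Well-formedness: edges are loop-free and their endpoints are vertices. -/
def WF (G : LGraph Lv Le) : Prop :=
  (∀ e ∈ G.edges, ¬ e.IsDiag) ∧ ∀ e ∈ G.edges, ∀ v ∈ e, v ∈ G.verts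

/-- The degree of a vertex: the number of incident edges. -/
noncomputable def degree (G : LGraph Lv Le) (v : ℕ) : ℕ :=
  (G.edges.filter fun e => v ∈ e).card

/-- Edit operations: insert/delete/relabel a vertex, insert/delete/relabel an edge. -/
inductive Op (Lv Le : Type) where
  | addV (v : ℕ) (l : Lv)
  | delV (v : ℕ)
  | relV (v : ℕ) (l : Lv)
  | addE (u v : ℕ) (l : Le)
  | delE (e : Sym2 ℕ)
  | relE (e : Sym2 ℕ) (l : Le)

/-- Applying an edit operation to a graph; `none` if the operation is invalid
(e.g. deleting a non-isolated vertex). -/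
noncomputable def apply (o : Op Lv Le) (G : LGraph Lv Le) : Option (LGraph Lv Le) :=
  match o with
  | .addV v l => if v ∈ G.verts then none else
      some ⟨insert v G.verts, G.edges, Function.update G.vl v l, G.el⟩
  | .delV v => if v ∈ G.verts ∧ ∀ e ∈ G.edges, v ∉ e then
      some ⟨G.verts.erase v, G.edges, G.vl, G.el⟩ else none
  | .relV v l => if v ∈ G.verts then
      some ⟨G.verts, G.edges, Function.update G.vl v l, G.el⟩ else none
  | .addE u v l => if u ∈ G.verts ∧ v ∈ G.verts ∧ u ≠ v ∧ s(u, v) ∉ G.edges then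
      some ⟨G.verts, insert s(u, v) G.edges, G.vl, Function.update G.el s(u, v) l⟩ else none
  | .delE e => if e ∈ G.edges then
      some ⟨G.verts, G.edges.erase e, G.vl, G.el⟩ else none
  | .relE e l => if e ∈ G.edges then
      some ⟨G.verts, G.edges, G.vl, Function.update G.el e l⟩ else none

/-- Applying a sequence of edit operations (an edit path). -/
noncomputable def applyList : List (Op Lv Le) → LGraph Lv Le → Option (LGraph Lv Le)
  | [], G => some G
  | o :: os, G => (apply o G).bind (applyList os)

/-- Cost of a single edit operation, with vertex insertion/deletion cost `cv`, vertex
relabeling cost `cvl`, edge insertion/deletion cost `ce` and edge relabeling cost `cel`. -/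
def opCost (cv cvl ce cel : ℝ) : Op Lv Le → ℝ
  | .addV _ _ => cv
  | .delV _ => cv
  | .relV _ _ => cvl
  | .addE _ _ _ => ce
  | .delE _ => ce
  | .relE _ _ => cel

/-- Graph isomorphism: a bijection of the vertex sets preserving labels, adjacency and
edge labels. -/
def Iso (G H : LGraph Lv Le) : Prop :=
  ∃ f : ℕ → ℕ, Set.BijOn f ↑G.verts ↑H.verts ∧
    (∀ v ∈ G.verts, H.vl (f v) = G.vl v) ∧
    (∀ u ∈ G.verts, ∀ v ∈ G.verts, (s(u, v) ∈ G.edges ↔ s(f u, f v) ∈ H.edges)) ∧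
    (∀ u ∈ G.verts, ∀ v ∈ G.verts, s(u, v) ∈ G.edges → H.el s(f u, f v) = G.el s(u, v))

/-- The graph edit distance: the infimum of the total cost over all edit paths
transforming `G` into a graph isomorphic to `H`. -/
noncomputable def GED (cv cvl ce cel : ℝ) (G H : LGraph Lv Le) : ℝ :=
  sInf {r | ∃ (ops : List (Op Lv Le)) (H' : LGraph Lv Le),
    applyList ops G = some H' ∧ Iso H' H ∧ r = (ops.map (opCost cv cvl ce cel)).sum}

/-- The vertex set of `G` padded with one dummy vertex (`Sum.inr`) for every vertex
of `H`, so that the padded vertex sets of `G` and `H` have equal cardinality. -/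
abbrev PadV (G H : LGraph Lv Le) : Type := {x // x ∈ G.verts} ⊕ {x // x ∈ H.verts}

/-- Ground cost `c_llb`: 0 for equal labels or two dummies, `cvl` for distinct labels,
`cv` for matching a vertex with a dummy. -/
noncomputable def cllb (cv cvl : ℝ) (G H : LGraph Lv Le) : PadV G H → PadV H G → ℝ
  | .inl u, .inl v => if G.vl u.1 = H.vl v.1 then 0 else cvl
  | .inl _, .inr _ => cv
  | .inr _, .inl _ => cv
  | .inr _, .inr _ => 0

/-- Degree of a padded vertex; dummies have degree 0. -/
noncomputable def padDeg (G H : LGraph Lv Le) : PadV G H → ℕ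
  | .inl u => G.degree u.1
  | .inr _ => 0

/-- Ground cost `c_dlb(u,v) = (ce/2)·|δ(u) − δ(v)|`. -/
noncomputable def cdlb (ce : ℝ) (G H : LGraph Lv Le) (x : PadV G H) (y : PadV H G) : ℝ :=
  ce / 2 * |(padDeg G H x : ℝ) - (padDeg H G y : ℝ)|

/-- Optimal assignment cost between the padded vertex sets of `G` and `H` under a ground
cost `c`: the minimum over all bijections `f` of `∑ x, c x (f x)`. -/
noncomputable def oaCost (G H : LGraph Lv Le) (c : PadV G H → PadV H G → ℝ) : ℝ :=
  sInf {r | ∃ f : PadV G H ≃ PadV H G, r = ∑ x, c x (f x)}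

/-- The label lower bound. -/
noncomputable def LLB (cv cvl : ℝ) (G H : LGraph Lv Le) : ℝ :=
  oaCost G H (cllb cv cvl G H)

/-- The degree lower bound. -/
noncomputable def DLB (ce : ℝ) (G H : LGraph Lv Le) : ℝ :=
  oaCost G H (cdlb ce G H)

/-- The combined lower bound `CLB = LLB + DLB`. -/
noncomputable def CLB (cv cvl ce : ℝ) (G H : LGraph Lv Le) : ℝ :=
  LLB cv cvl G H + DLB ce G H

end LGraph

/-!
Along an edit path, `CLB (·) H` drops by at most the cost of each operation. Relabelings and edge
edits keep the vertex set, so every assignment for the edited graph is one for the original graph,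
and its cost changes pointwise: by `cvl` at a relabeled vertex and by `ce / 2` at each endpoint of
an inserted or deleted edge. Inserting or deleting an isolated vertex `v` changes the padded vertex
sets by `v` and its dummy; matching `v` with its own dummy transports assignments between the two
problems at extra cost `cv` for `LLB` and `0` for `DLB`. Finally `CLB H' H = 0` for `H' ≅ H`, so
summing along any edit path from `G` to a copy of `H` bounds `CLB G H` by the cost of the path.
-/

section Assignment

variable {α β α' β' : Type*}

lemma exists_trans_optionCongr_trans_eq (e₁ : α' ≃ Option α) (e₂ : β' ≃ Option β) (g : α' ≃ β')
    (hg : g (e₁.symm none) = e₂.symm none) :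
    ∃ f : α ≃ β, e₁.trans (f.optionCongr.trans e₂.symm) = g := by
  set h := e₁.symm.trans (g.trans e₂)
  have hnone : h none = none := by simp [h, hg]
  refine ⟨h.removeNone, Equiv.ext fun x => ?_⟩
  suffices h.removeNone.optionCongr = h by simp [this, h]
  refine Equiv.ext fun o => ?_
  cases o with
  | none => simp [hnone]
  | some a =>
    rw [Equiv.optionCongr_apply, Option.map_some, Equiv.removeNone_some]
    exact Option.ne_none_iff_exists'.1 fun ha => by simpa using h.injective (ha.trans hnone.symm)

variable [Fintype α]

lemma sum_swap_trans [DecidableEq α] (c : α → β → ℝ) (f : α ≃ β) {r s : α} (hrs : r ≠ s) :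
    ∑ x, c x (((Equiv.swap r s).trans f) x) =
      ∑ x, c x (f x) + (c r (f s) + c s (f r) - c r (f r) - c s (f s)) := by
  rw [← sub_eq_iff_eq_add', ← Finset.sum_sub_distrib, Fintype.sum_eq_add r s hrs]
  · simp only [Equiv.trans_apply, Equiv.swap_apply_left, Equiv.swap_apply_right]
    ring
  · rintro x ⟨hr, hs⟩
    simp [Equiv.swap_apply_of_ne_of_ne hr hs]

lemma sum_trans_optionCongr_trans [Fintype α'] (e₁ : α' ≃ Option α) (e₂ : β' ≃ Option β)
    (c : α' → β' → ℝ) (f : α ≃ β) :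
    ∑ x, c x ((e₁.trans (f.optionCongr.trans e₂.symm)) x) =
      c (e₁.symm none) (e₂.symm none) + ∑ a, c (e₁.symm (some a)) (e₂.symm (some (f a))) := by
  rw [← e₁.symm.sum_comp, Fintype.sum_option]
  simp

end Assignment

section PaddedAssignment

variable {A B : Type*}

lemma exists_inr_eq_inr_of_inl_eq_inl [Finite B] (f : A ⊕ B ≃ B ⊕ A) {a : A} {b : B}
    (hab : f (.inl a) = .inl b) : ∃ d w, f (.inr d) = .inr w := by
  by_contra! hcon
  have hinl : ∀ d, ∃ y, f (.inr d) = .inl y := fun d => by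
    rcases hfd : f (.inr d) with y | w
    · exact ⟨y, rfl⟩
    · exact absurd hfd (hcon d w)
  choose φ hφ using hinl
  have hφinj : Function.Injective φ := fun d d' hdd' =>
    Sum.inr_injective (f.injective (by rw [hφ, hφ, hdd']))
  obtain ⟨d, hd⟩ := (Finite.injective_iff_surjective.1 hφinj) b
  exact Sum.inr_ne_inl (f.injective ((hφ d).trans (hd ▸ hab.symm)))

lemma sum_trans_sumCongr_swap [Fintype A] [Fintype B] [DecidableEq A] (c : A ⊕ B → B ⊕ A → ℝ)
    (hcol : ∀ x w w', c x (.inr w) = c x (.inr w')) (f : A ⊕ B ≃ B ⊕ A) (w w' : A) :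
    ∑ x, c x ((f.trans ((Equiv.refl B).sumCongr (Equiv.swap w w'))) x) = ∑ x, c x (f x) := by
  refine Fintype.sum_congr _ _ fun x => ?_
  simp only [Equiv.trans_apply, Equiv.sumCongr_apply]
  rcases f x with y | z
  · rfl
  · exact hcol _ _ _

/- If `v` is matched to a dummy, permute the dummy columns. If `v` is matched to a real column `y`,
some dummy row `d` is matched to a dummy (there are as many dummy–dummy pairs as real–real ones),
and `d` takes over `y` while `v` takes `d`'s dummy. -/
lemma exists_map_inl_eq_inr_sum_le [Fintype A] [Fintype B] [DecidableEq A] [DecidableEq B]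
    (c : A ⊕ B → B ⊕ A → ℝ) (a : ℝ) (v : A)
    (hcol : ∀ x w w', c x (.inr w) = c x (.inr w')) (hdd : ∀ d w, c (.inr d) (.inr w) = 0)
    (hrow : ∀ d y, c (.inr d) (.inl y) ≤ a + c (.inl v) (.inl y))
    (hnn : 0 ≤ a + c (.inl v) (.inr v)) (f : A ⊕ B ≃ B ⊕ A) :
    ∃ g : A ⊕ B ≃ B ⊕ A, g (.inl v) = .inr v ∧
      ∑ x, c x (g x) ≤ a + c (.inl v) (.inr v) + ∑ x, c x (f x) := by
  rcases hfv : f (.inl v) with y | w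
  · obtain ⟨d, w, hdw⟩ := exists_inr_eq_inr_of_inl_eq_inl f hfv
    set f' := f.trans ((Equiv.refl B).sumCongr (Equiv.swap w v))
    have hf'd : f' (.inr d) = .inr v := by simp [f', hdw]
    have hf'v : f' (.inl v) = .inl y := by simp [f', hfv, Equiv.swap_apply_of_ne_of_ne]
    refine ⟨(Equiv.swap (.inl v) (.inr d)).trans f', by simp [hf'd], ?_⟩
    rw [sum_swap_trans c f' Sum.inl_ne_inr, sum_trans_sumCongr_swap c hcol, hf'd, hf'v, hdd]
    linarith [hrow d y]
  · refine ⟨f.trans ((Equiv.refl B).sumCongr (Equiv.swap w v)), by simp [hfv], ?_⟩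
    rw [sum_trans_sumCongr_swap c hcol]
    linarith

end PaddedAssignment

open Finset in
lemma card_filter_update_ne_le_one {α β : Type*} [DecidableEq α] (s : Finset α) (f : α → β) (v : α)
    (l : β) : #{u ∈ s | Function.update f v l u ≠ f u} ≤ 1 :=
  card_le_one.2 fun a ha b hb => by
    simp only [mem_filter] at ha hb
    grind [Function.update_of_ne]

lemma Sym2.map_map_of_leftInvOn {α β : Type*} {φ : β → α} {ψ : α → β} {s : Set α}
    (h : Set.LeftInvOn φ ψ s) {e : Sym2 α} (he : ∀ x ∈ e, x ∈ s) : (e.map ψ).map φ = e := by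
  rw [Sym2.map_map, Sym2.map_congr (f := φ ∘ ψ) (g := id) fun x hx => h (he x hx), Sym2.map_id, id]

namespace LGraph

open Finset

variable {Lv Le : Type}

lemma oaCost_le {G H : LGraph Lv Le} (c : PadV G H → PadV H G → ℝ) (f : PadV G H ≃ PadV H G) :
    oaCost G H c ≤ ∑ x, c x (f x) :=
  csInf_le ((Set.finite_range fun g : PadV G H ≃ PadV H G => ∑ x, c x (g x)).subset
    (by rintro r ⟨g, rfl⟩; exact ⟨g, rfl⟩)).bddBelow ⟨f, rfl⟩

lemma oaCost_le_add_of_forall {G H G' H' : LGraph Lv Le} {c : PadV G H → PadV H G → ℝ}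
    {c' : PadV G' H' → PadV H' G' → ℝ} (a : ℝ)
    (h : ∀ f' : PadV G' H' ≃ PadV H' G', ∃ f : PadV G H ≃ PadV H G,
      ∑ x, c x (f x) ≤ a + ∑ x, c' x (f' x)) :
    oaCost G H c ≤ a + oaCost G' H' c' := by
  rw [← sub_le_iff_le_add']
  refine le_csInf ⟨_, Equiv.sumComm _ _, rfl⟩ ?_
  rintro r ⟨f', rfl⟩
  obtain ⟨f, hf⟩ := h f'
  linarith [oaCost_le c f]

lemma LLB_le_add_of_verts_eq (cv : ℝ) {cvl : ℝ} (hcvl : 0 ≤ cvl) {G G' : LGraph Lv Le}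
    (H : LGraph Lv Le) (hV : G'.verts = G.verts) :
    LLB cv cvl G H ≤ cvl * #{u ∈ G.verts | G'.vl u ≠ G.vl u} + LLB cv cvl G' H := by
  obtain ⟨V, E, vl, el⟩ := G'
  obtain rfl : V = G.verts := hV
  let w : PadV G H → ℝ := Sum.elim (fun u => if vl u = G.vl u then 0 else cvl) 0
  have hw : ∑ x, w x = cvl * #{u ∈ G.verts | vl u ≠ G.vl u} := by
    simp only [w, Fintype.sum_sum_type, Sum.elim_inl, Sum.elim_inr, Pi.zero_apply, sum_const_zero,
      add_zero]
    rw [Finset.sum_coe_sort G.verts (fun u => if vl u = G.vl u then 0 else cvl), Finset.sum_ite]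
    simp [mul_comm]
  refine oaCost_le_add_of_forall _ fun f => ⟨f, ?_⟩
  rw [← hw, ← Finset.sum_add_distrib]
  refine Finset.sum_le_sum fun x _ => ?_
  generalize f x = y
  rcases x with u | u <;> rcases y with y | y <;>
    simp only [w, cllb, Sum.elim_inl, Sum.elim_inr, Pi.zero_apply] <;> grind

lemma DLB_le_add_of_verts_eq {ce : ℝ} (hce : 0 ≤ ce) {G G' : LGraph Lv Le} (H : LGraph Lv Le)
    (hV : G'.verts = G.verts) :
    DLB ce G H ≤ ce / 2 * ∑ u ∈ G.verts, |(G.degree u : ℝ) - G'.degree u| + DLB ce G' H := by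
  obtain ⟨V, E, vl, el⟩ := G'
  obtain rfl : V = G.verts := hV
  let G' : LGraph Lv Le := ⟨G.verts, E, vl, el⟩
  let w : PadV G H → ℝ := Sum.elim (fun u => ce / 2 * |(G.degree u : ℝ) - G'.degree u|) 0
  have hw : ∑ x, w x = ce / 2 * ∑ u ∈ G.verts, |(G.degree u : ℝ) - G'.degree u| := by
    simp only [w, Fintype.sum_sum_type, Sum.elim_inl, Sum.elim_inr, Pi.zero_apply, sum_const_zero,
      add_zero, ← Finset.mul_sum]
    rw [Finset.sum_coe_sort G.verts (fun u => |(G.degree u : ℝ) - G'.degree u|)]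
  refine oaCost_le_add_of_forall _ fun f => ⟨f, ?_⟩
  rw [← hw, ← Finset.sum_add_distrib]
  refine Finset.sum_le_sum fun x _ => ?_
  generalize f x = y
  have hy : padDeg H G y = padDeg H G' y := by cases y <;> rfl
  have hwx : w x = ce / 2 * |(padDeg G H x : ℝ) - padDeg G' H x| := by
    rcases x with u | u <;> simp [w, padDeg]
  simp only [cdlb, hy, hwx, ← mul_add]
  exact mul_le_mul_of_nonneg_left (abs_sub_le _ _ _) (by positivity)

lemma sum_abs_degree_sub_eq_two {G G' : LGraph Lv Le} {a b : ℕ} (hab : a ≠ b) (ha : a ∈ G.verts)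
    (hb : b ∈ G.verts) (he : s(a, b) ∉ G.edges) (hE : G'.edges = insert s(a, b) G.edges) :
    ∑ u ∈ G.verts, |(G'.degree u : ℝ) - G.degree u| = 2 := by
  have hdeg : ∀ u, G'.degree u = G.degree u + if u ∈ s(a, b) then 1 else 0 := by
    intro u
    rw [degree, degree, hE, filter_insert]
    split_ifs with hu
    · exact card_insert_of_notMem fun h => he (mem_filter.1 h).1
    · rfl
  have hfilter : {u ∈ G.verts | u ∈ s(a, b)} = {a, b} := by
    ext u
    simp only [mem_filter, Sym2.mem_iff, mem_insert, mem_singleton]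
    constructor
    · exact And.right
    · rintro (rfl | rfl) <;> simp_all
  simp only [hdeg, Nat.cast_add, Nat.cast_ite, Nat.cast_one, Nat.cast_zero, add_sub_cancel_left,
    apply_ite abs, abs_one, abs_zero]
  rw [sum_boole, hfilter, card_pair hab]
  norm_num

structure AddsIsolated (G : LGraph Lv Le) (v : ℕ) (K : LGraph Lv Le) : Prop where
  not_mem : v ∉ G.verts
  verts_eq : K.verts = insert v G.verts
  edges_eq : K.edges = G.edges
  vl_eq : ∀ u ∈ G.verts, K.vl u = G.vl u
  isolated : ∀ e ∈ G.edges, v ∉ e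

namespace AddsIsolated

variable {G K : LGraph Lv Le} {v : ℕ} (h : AddsIsolated G v K)
include h

lemma mem_self : v ∈ K.verts := h.verts_eq ▸ mem_insert_self v G.verts

lemma mem_of_mem {u : ℕ} (hu : u ∈ G.verts) : u ∈ K.verts := h.verts_eq ▸ mem_insert_of_mem hu

lemma mem_of_ne {u : ℕ} (hu : u ∈ K.verts) (huv : u ≠ v) : u ∈ G.verts :=
  (mem_insert.1 (h.verts_eq ▸ hu)).resolve_left huv

lemma degree_eq (u : ℕ) : K.degree u = G.degree u := by rw [degree, degree, h.edges_eq]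

lemma degree_self : K.degree v = 0 := by
  rw [h.degree_eq, degree, card_eq_zero, filter_eq_empty_iff]
  exact h.isolated

def padLeft (H : LGraph Lv Le) : PadV K H ≃ Option (PadV G H) where
  toFun x := match x with
    | .inl u => if hu : u.1 = v then none else some (.inl ⟨u, h.mem_of_ne u.2 hu⟩)
    | .inr w => some (.inr w)
  invFun o := match o with
    | none => .inl ⟨v, h.mem_self⟩
    | some (.inl u) => .inl ⟨u, h.mem_of_mem u.2⟩
    | some (.inr w) => .inr w
  left_inv x := by
    rcases x with ⟨u, hu⟩ | w
    · by_cases huv : u = v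
      · subst huv; simp
      · simp [huv]
    · rfl
  right_inv o := by
    rcases o with _ | ⟨u, hu⟩ | w
    · simp
    · simp [show u ≠ v from fun huv => h.not_mem (huv ▸ hu)]
    · rfl

def padRight (H : LGraph Lv Le) : PadV H K ≃ Option (PadV H G) :=
  (Equiv.sumComm _ _).trans ((h.padLeft H).trans (Equiv.sumComm _ _).optionCongr)

@[simp] lemma padLeft_symm_none (H : LGraph Lv Le) :
    (h.padLeft H).symm none = .inl ⟨v, h.mem_self⟩ := rfl

@[simp] lemma padRight_symm_none (H : LGraph Lv Le) :
    (h.padRight H).symm none = .inr ⟨v, h.mem_self⟩ := rfl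

variable {H : LGraph Lv Le} {cG : PadV G H → PadV H G → ℝ} {cK : PadV K H → PadV H K → ℝ}

lemma oaCost_le_add
    (hc : ∀ x y, cK ((h.padLeft H).symm (some x)) ((h.padRight H).symm (some y)) = cG x y) :
    oaCost K H cK ≤ cK (.inl ⟨v, h.mem_self⟩) (.inr ⟨v, h.mem_self⟩) + oaCost G H cG := by
  refine oaCost_le_add_of_forall _ fun f =>
    ⟨(h.padLeft H).trans (f.optionCongr.trans (h.padRight H).symm), le_of_eq ?_⟩
  rw [sum_trans_optionCongr_trans, padLeft_symm_none, padRight_symm_none]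
  simp only [hc]

lemma oaCost_base_le_add
    (hc : ∀ x y, cK ((h.padLeft H).symm (some x)) ((h.padRight H).symm (some y)) = cG x y)
    (a : ℝ) (hcol : ∀ x w w', cK x (.inr w) = cK x (.inr w'))
    (hdd : ∀ d w, cK (.inr d) (.inr w) = 0)
    (hrow : ∀ d y, cK (.inr d) (.inl y) ≤ a + cK (.inl ⟨v, h.mem_self⟩) (.inl y))
    (hnn : 0 ≤ a + cK (.inl ⟨v, h.mem_self⟩) (.inr ⟨v, h.mem_self⟩)) :
    oaCost G H cG ≤ a + oaCost K H cK := by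
  refine oaCost_le_add_of_forall _ fun f => ?_
  obtain ⟨g, hgv, hg⟩ := exists_map_inl_eq_inr_sum_le cK a _ hcol hdd hrow hnn f
  obtain ⟨f₀, rfl⟩ := exists_trans_optionCongr_trans_eq (h.padLeft H) (h.padRight H) g hgv
  rw [sum_trans_optionCongr_trans] at hg
  simp only [hc, padLeft_symm_none, padRight_symm_none] at hg
  exact ⟨f₀, by linarith⟩

lemma cllb_padLeft_symm (cv cvl : ℝ) (x : PadV G H) (y : PadV H G) :
    cllb cv cvl K H ((h.padLeft H).symm (some x)) ((h.padRight H).symm (some y)) =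
      cllb cv cvl G H x y := by
  rcases x with u | u <;> rcases y with w | w
  · show (if K.vl u = H.vl w then 0 else cvl) = _
    rw [h.vl_eq _ u.2]
    rfl
  all_goals rfl

lemma cdlb_padLeft_symm (ce : ℝ) (x : PadV G H) (y : PadV H G) :
    cdlb ce K H ((h.padLeft H).symm (some x)) ((h.padRight H).symm (some y)) = cdlb ce G H x y := by
  rcases x with u | u <;> rcases y with w | w
  all_goals simp only [cdlb, padDeg, h.degree_eq]; rfl

lemma LLB_le_add (cv cvl : ℝ) : LLB cv cvl K H ≤ cv + LLB cv cvl G H :=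
  h.oaCost_le_add (h.cllb_padLeft_symm cv cvl)

lemma DLB_le (ce : ℝ) : DLB ce K H ≤ DLB ce G H := by
  simpa [DLB, cdlb, padDeg, h.degree_self] using h.oaCost_le_add (h.cdlb_padLeft_symm ce)

lemma LLB_base_le_add {cv cvl : ℝ} (hcv : 0 ≤ cv) (hcvl : 0 ≤ cvl) :
    LLB cv cvl G H ≤ cv + LLB cv cvl K H := by
  refine h.oaCost_base_le_add (h.cllb_padLeft_symm cv cvl) cv (fun x _ _ => by cases x <;> rfl)
    (fun _ _ => rfl) (fun _ _ => ?_) (by simp [cllb, hcv])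
  show cv ≤ cv + if _ then 0 else cvl
  split_ifs <;> linarith

lemma DLB_base_le {ce : ℝ} (hce : 0 ≤ ce) : DLB ce G H ≤ DLB ce K H := by
  simpa [DLB] using h.oaCost_base_le_add (h.cdlb_padLeft_symm ce) 0 (fun _ _ _ => rfl)
    (fun _ _ => by simp [cdlb, padDeg]) (fun _ _ => by simp [cdlb, padDeg, h.degree_self])
    (by simp only [cdlb]; positivity)

lemma CLB_le_add {cv cvl ce : ℝ} : CLB cv cvl ce K H ≤ cv + CLB cv cvl ce G H := by
  have := h.LLB_le_add (H := H) cv cvl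
  have := h.DLB_le (H := H) ce
  unfold CLB
  linarith

lemma CLB_base_le_add {cv cvl ce : ℝ} (hcv : 0 ≤ cv) (hcvl : 0 ≤ cvl) (hce : 0 ≤ ce) :
    CLB cv cvl ce G H ≤ cv + CLB cv cvl ce K H := by
  have := h.LLB_base_le_add (H := H) hcv hcvl
  have := h.DLB_base_le (H := H) hce
  unfold CLB
  linarith

end AddsIsolated

lemma WF.apply {G G' : LGraph Lv Le} {o : Op Lv Le} (hG : G.WF) (h : G.apply o = some G') :
    G'.WF := by
  obtain ⟨hloop, hmem⟩ := hG
  cases o <;> simp only [LGraph.apply] at h <;> split_ifs at h <;> cases h <;>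
    constructor <;> intro e he <;> grind [Sym2.mk_isDiag_iff]

lemma CLB_le_add_of_verts_eq {cv cvl ce c : ℝ} (hcvl : 0 ≤ cvl) (hce : 0 ≤ ce)
    {G G' : LGraph Lv Le} (H : LGraph Lv Le) (hV : G'.verts = G.verts)
    (hc : cvl * #{u ∈ G.verts | G'.vl u ≠ G.vl u} +
      ce / 2 * ∑ u ∈ G.verts, |(G.degree u : ℝ) - G'.degree u| ≤ c) :
    CLB cv cvl ce G H ≤ c + CLB cv cvl ce G' H := by
  have := LLB_le_add_of_verts_eq cv hcvl H hV
  have := DLB_le_add_of_verts_eq hce H hV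
  unfold CLB
  linarith

lemma CLB_le_opCost_add {cv cvl ce cel : ℝ} (hcv : 0 ≤ cv) (hcvl : 0 ≤ cvl) (hce : 0 ≤ ce)
    (hcel : 0 ≤ cel) {G G' : LGraph Lv Le} (H : LGraph Lv Le) (hG : G.WF) {o : Op Lv Le}
    (h : G.apply o = some G') :
    CLB cv cvl ce G H ≤ opCost cv cvl ce cel o + CLB cv cvl ce G' H := by
  cases o with
  | addV v l =>
    simp only [LGraph.apply] at h; split_ifs at h with hv; cases h
    refine AddsIsolated.CLB_base_le_add (v := v) ?_ hcv hcvl hce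
    exact ⟨hv, rfl, rfl, fun u hu => Function.update_of_ne (by rintro rfl; exact hv hu) _ _,
      fun e he hve => hv (hG.2 e he v hve)⟩
  | delV v =>
    simp only [LGraph.apply] at h; split_ifs at h with hv; cases h
    refine AddsIsolated.CLB_le_add (v := v) ?_
    exact ⟨notMem_erase v _, (insert_erase hv.1).symm, rfl, fun _ _ => rfl, hv.2⟩
  | relV v l =>
    simp only [LGraph.apply] at h; split_ifs at h with hv; cases h
    refine CLB_le_add_of_verts_eq hcvl hce H rfl ?_
    simp only [degree, sub_self, abs_zero, sum_const_zero, mul_zero, add_zero, opCost]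
    exact mul_le_of_le_one_right hcvl
      (by exact_mod_cast card_filter_update_ne_le_one G.verts G.vl v l)
  | addE a b l =>
    simp only [LGraph.apply] at h; split_ifs at h with hab; cases h
    obtain ⟨ha, hb, hab, he⟩ := hab
    refine CLB_le_add_of_verts_eq hcvl hce H rfl ?_
    simp_rw [abs_sub_comm (G.degree _ : ℝ)]
    rw [sum_abs_degree_sub_eq_two hab ha hb he rfl]
    simp [opCost]
  | delE e =>
    induction e using Sym2.ind with | h a b =>
    simp only [LGraph.apply] at h; split_ifs at h with he; cases h
    have hab : a ≠ b := fun hab => hG.1 _ he (Sym2.mk_isDiag_iff.2 hab)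
    have h2 := sum_abs_degree_sub_eq_two (G := ⟨G.verts, G.edges.erase s(a, b), G.vl, G.el⟩)
      (G' := G) hab (hG.2 _ he a (Sym2.mem_mk_left a b)) (hG.2 _ he b (Sym2.mem_mk_right a b))
      (notMem_erase _ _) (insert_erase he).symm
    refine CLB_le_add_of_verts_eq hcvl hce H rfl ?_
    dsimp only at h2
    simp [h2, opCost]
  | relE e l =>
    simp only [LGraph.apply] at h; split_ifs at h with he; cases h
    refine CLB_le_add_of_verts_eq hcvl hce H rfl ?_
    simp [degree, opCost, hcel]

lemma WF.applyList {G G' : LGraph Lv Le} {ops : List (Op Lv Le)} (hG : G.WF)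
    (h : G.applyList ops = some G') : G'.WF := by
  induction ops generalizing G with
  | nil => cases h; exact hG
  | cons o ops ih =>
    obtain ⟨G₁, h₁, h₂⟩ := Option.bind_eq_some_iff.1 h
    exact ih (hG.apply h₁) h₂

lemma CLB_le_sum_opCost_add {cv cvl ce cel : ℝ} (hcv : 0 ≤ cv) (hcvl : 0 ≤ cvl) (hce : 0 ≤ ce)
    (hcel : 0 ≤ cel) (H : LGraph Lv Le) {ops : List (Op Lv Le)} {G G' : LGraph Lv Le}
    (hG : G.WF) (h : G.applyList ops = some G') :
    CLB cv cvl ce G H ≤ (ops.map (opCost cv cvl ce cel)).sum + CLB cv cvl ce G' H := by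
  induction ops generalizing G with
  | nil => cases h; simp
  | cons o ops ih =>
    obtain ⟨G₁, h₁, h₂⟩ := Option.bind_eq_some_iff.1 h
    have := CLB_le_opCost_add hcv hcvl hce hcel H hG h₁
    have := ih (hG.apply h₁) h₂
    simp only [List.map_cons, List.sum_cons]
    linarith

lemma WF.map_mem_edges {G H : LGraph Lv Le} (hG : G.WF) {f : ℕ → ℕ}
    (hadj : ∀ u ∈ G.verts, ∀ v ∈ G.verts, s(u, v) ∈ G.edges → s(f u, f v) ∈ H.edges)
    {e : Sym2 ℕ} (he : e ∈ G.edges) : e.map f ∈ H.edges := by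
  induction e using Sym2.ind with | h a b =>
  exact hadj a (hG.2 _ he a (Sym2.mem_mk_left a b)) b (hG.2 _ he b (Sym2.mem_mk_right a b)) he

lemma degree_eq_of_bijOn {G H : LGraph Lv Le} (hG : G.WF) (hH : H.WF) {f : ℕ → ℕ}
    (hf : Set.BijOn f G.verts H.verts)
    (hadj : ∀ u ∈ G.verts, ∀ v ∈ G.verts, (s(u, v) ∈ G.edges ↔ s(f u, f v) ∈ H.edges))
    {u : ℕ} (hu : u ∈ G.verts) : G.degree u = H.degree (f u) := by
  set g := Function.invFunOn f G.verts
  have hinv : Set.InvOn g f G.verts H.verts := hf.invOn_invFunOn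
  have hg : Set.BijOn g H.verts G.verts := hf.symm hinv.symm
  have hgadj : ∀ x ∈ H.verts, ∀ y ∈ H.verts, s(x, y) ∈ H.edges → s(g x, g y) ∈ G.edges :=
    fun x hx y hy hxy => (hadj _ (hg.mapsTo hx) _ (hg.mapsTo hy)).2 (by
      rwa [hinv.2 hx, hinv.2 hy])
  refine card_nbij' (Sym2.map f) (Sym2.map g) ?_ ?_ ?_ ?_
  · intro e he
    rw [mem_coe, mem_filter] at he ⊢
    exact ⟨hG.map_mem_edges (fun a ha b hb => (hadj a ha b hb).1) he.1,
      Sym2.mem_map.2 ⟨u, he.2, rfl⟩⟩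
  · intro e he
    rw [mem_coe, mem_filter] at he ⊢
    exact ⟨hH.map_mem_edges hgadj he.1, Sym2.mem_map.2 ⟨f u, he.2, hinv.1 hu⟩⟩
  · intro e he
    exact Sym2.map_map_of_leftInvOn hinv.1 (hG.2 e (mem_filter.1 he).1)
  · intro e he
    exact Sym2.map_map_of_leftInvOn hinv.2 (hH.2 e (mem_filter.1 he).1)

lemma CLB_nonpos_of_iso (cv cvl ce : ℝ) {G H : LGraph Lv Le} (hG : G.WF) (hH : H.WF)
    (hiso : Iso G H) : CLB cv cvl ce G H ≤ 0 := by
  obtain ⟨f, hf, hvl, hadj, -⟩ := hiso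
  let e : {x // x ∈ G.verts} ≃ {x // x ∈ H.verts} := hf.equiv f
  have he (u : {x // x ∈ G.verts}) : (e u : ℕ) = f u := rfl
  have hLLB : LLB cv cvl G H ≤ 0 := by
    refine (oaCost_le _ (e.sumCongr e.symm)).trans_eq (Finset.sum_eq_zero fun x _ => ?_)
    rcases x with u | u
    · simp [cllb, he, hvl u u.2]
    · rfl
  have hDLB : DLB ce G H ≤ 0 := by
    refine (oaCost_le _ (e.sumCongr e.symm)).trans_eq (Finset.sum_eq_zero fun x _ => ?_)
    rcases x with u | u
    · simp [cdlb, padDeg, he, degree_eq_of_bijOn hG hH hf hadj u.2]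
    · simp [cdlb, padDeg]
  unfold CLB
  linarith

lemma applyList_append (ops ops' : List (Op Lv Le)) (G : LGraph Lv Le) :
    G.applyList (ops ++ ops') = (G.applyList ops).bind (applyList ops') := by
  induction ops generalizing G with
  | nil => rfl
  | cons o ops ih => simp [LGraph.applyList, ih, Option.bind_assoc]

lemma exists_applyList_delE (V : Finset ℕ) (vl : ℕ → Lv) (el : Sym2 ℕ → Le)
    (E : Finset (Sym2 ℕ)) : ∃ ops, applyList ops ⟨V, E, vl, el⟩ = some ⟨V, ∅, vl, el⟩ := by
  induction E using Finset.induction_on with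
  | empty => exact ⟨[], rfl⟩
  | insert e E he ih =>
    obtain ⟨ops, hops⟩ := ih
    exact ⟨.delE e :: ops, by simp [LGraph.applyList, LGraph.apply, erase_insert he, hops]⟩

lemma exists_applyList_delV (vl : ℕ → Lv) (el : Sym2 ℕ → Le) (V : Finset ℕ) :
    ∃ ops, applyList ops ⟨V, ∅, vl, el⟩ = some ⟨∅, ∅, vl, el⟩ := by
  induction V using Finset.induction_on with
  | empty => exact ⟨[], rfl⟩
  | insert v V hv ih =>
    obtain ⟨ops, hops⟩ := ih
    exact ⟨.delV v :: ops, by simp [LGraph.applyList, LGraph.apply, erase_insert hv, hops]⟩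

lemma exists_applyList_addV (lab : ℕ → Lv) (el : Sym2 ℕ → Le) (S : Finset ℕ) :
    ∀ (V : Finset ℕ) (vl : ℕ → Lv), Disjoint S V → ∃ ops, applyList ops ⟨V, ∅, vl, el⟩ =
      some ⟨S ∪ V, ∅, fun u => if u ∈ S then lab u else vl u, el⟩ := by
  induction S using Finset.induction_on with
  | empty => exact fun V vl _ => ⟨[], by simp [LGraph.applyList]⟩
  | insert v S hv ih =>
    intro V vl hSV
    rw [disjoint_insert_left] at hSV
    obtain ⟨ops, hops⟩ := ih (insert v V) (Function.update vl v (lab v))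
      (disjoint_insert_right.2 ⟨hv, hSV.2⟩)
    refine ⟨.addV v (lab v) :: ops, ?_⟩
    simp only [LGraph.applyList, LGraph.apply, if_neg hSV.1, Option.bind_some, hops,
      union_insert, insert_union]
    congr 3
    funext u
    by_cases huv : u = v <;> simp [huv, hv]

lemma exists_applyList_addE (V : Finset ℕ) (vl : ℕ → Lv) (lab : Sym2 ℕ → Le)
    (T : Finset (Sym2 ℕ)) (hT : ∀ e ∈ T, ¬e.IsDiag ∧ ∀ v ∈ e, v ∈ V) :
    ∀ (E : Finset (Sym2 ℕ)) (el : Sym2 ℕ → Le), Disjoint T E → ∃ ops, applyList ops ⟨V, E, vl, el⟩ =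
      some ⟨V, T ∪ E, vl, fun e => if e ∈ T then lab e else el e⟩ := by
  induction T using Finset.induction_on with
  | empty => exact fun E el _ => ⟨[], by simp [LGraph.applyList]⟩
  | insert e T he ih =>
    intro E el hTE
    rw [disjoint_insert_left] at hTE
    obtain ⟨ops, hops⟩ := ih (fun e' he' => hT e' (mem_insert_of_mem he')) (insert e E)
      (Function.update el e (lab e)) (disjoint_insert_right.2 ⟨he, hTE.2⟩)
    obtain ⟨hdiag, hV⟩ := hT e (mem_insert_self e T)
    induction e using Sym2.ind with | h a b =>
    refine ⟨.addE a b (lab s(a, b)) :: ops, ?_⟩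
    simp only [LGraph.applyList, LGraph.apply, Option.bind_some, hops, union_insert, insert_union,
      if_pos (show a ∈ V ∧ b ∈ V ∧ a ≠ b ∧ s(a, b) ∉ E from
        ⟨hV a (Sym2.mem_mk_left a b), hV b (Sym2.mem_mk_right a b),
          fun hab => hdiag (Sym2.mk_isDiag_iff.2 hab), hTE.1⟩)]
    congr 3
    funext e'
    by_cases he' : e' = s(a, b) <;> simp [he', he]

lemma exists_applyList_iso {H : LGraph Lv Le} (hH : H.WF) (G : LGraph Lv Le) :
    ∃ (ops : List (Op Lv Le)) (G' : LGraph Lv Le), G.applyList ops = some G' ∧ Iso G' H := by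
  obtain ⟨V, E, vl, el⟩ := G
  obtain ⟨ops₁, h₁⟩ := exists_applyList_delE V vl el E
  obtain ⟨ops₂, h₂⟩ := exists_applyList_delV vl el V
  obtain ⟨ops₃, h₃⟩ := exists_applyList_addV H.vl el H.verts ∅ vl (disjoint_empty_right _)
  rw [union_empty] at h₃
  obtain ⟨ops₄, h₄⟩ := exists_applyList_addE H.verts (fun u => if u ∈ H.verts then H.vl u else vl u)
    H.el H.edges (fun e he => ⟨hH.1 e he, hH.2 e he⟩) ∅ el (disjoint_empty_right _)
  rw [union_empty] at h₄
  refine ⟨ops₁ ++ ops₂ ++ ops₃ ++ ops₄, _, by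
    rw [applyList_append, applyList_append, applyList_append, h₁, Option.bind_some, h₂,
      Option.bind_some, h₃, Option.bind_some, h₄], id,
    by simpa using Set.bijOn_id _, ?_, ?_, ?_⟩ <;> simp +contextual

end LGraph

open LGraph in
/-- For any two labeled graphs `G` and `H`, the combined lower bound
`CLB(G,H) = LLB(G,H) + DLB(G,H)` is at most the graph edit distance `GED(G,H)`. -/
theorem clb_le_ged {Lv Le : Type} (cv cvl ce cel : ℝ)
    (hcv : 0 ≤ cv) (hcvl : 0 ≤ cvl) (hce : 0 ≤ ce) (hcel : 0 ≤ cel)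
    (G H : LGraph Lv Le) (hG : G.WF) (hH : H.WF) :
    CLB cv cvl ce G H ≤ GED cv cvl ce cel G H := by
  obtain ⟨ops₀, H₀, h₀, hiso₀⟩ := exists_applyList_iso hH G
  refine le_csInf ⟨_, ops₀, H₀, h₀, hiso₀, rfl⟩ ?_
  rintro r ⟨ops, H', hops, hiso, rfl⟩
  have := CLB_le_sum_opCost_add hcv hcvl hce hcel H hG hops
  have := CLB_nonpos_of_iso cv cvl ce (hG.applyList hops) hH hiso
  linarith
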